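/- Let x be a real number with x > 1, for each positive integer n let r(n) be the unique positive real solution of t(e^t + x) = 2 n x log x, and set λ_0(n) = x e^{−r(n)}, a_0(n) = (1 + λ_0(n))²/(4 n λ_0(n) log x), χ(n) = log n/(n λ_0(n)). Define the first steepest-descent coefficient c_{10}(n) = −Q_1(a_0(n), λ_0(n)) χ(n)/(6 (1 + 2 a_0(n))³), where Q_1(a, ξ) = P_{11}(ξ) − 3 a P_{12}(ξ) with P_{11}(ξ) = 1 + ξ + ξ² and P_{12}(ξ) = 1 − 4ξ + ξ². Then c_{10}(n) → −(1/3) log x as n → ∞. -/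

import Mathlib

/-!
Write `λ = x e^{-r}` and `L = log x`. Multiplying the saddle-point equation
`r (e^r + x) = 2 n x L` by `e^{-r}` turns it into `r (1 + λ) = 2 n λ L`, so `a₀ = (1 + λ)/(2r)`
and `χ = 2L log n / (r (1 + λ))`. Since `r → ∞`, we get `λ → 0`, `a₀ → 0`, and taking
logarithms, `log n = r + log r + O(1)`, so `χ → 2L`. Hence `c₁₀ → -Q₁(0, 0) · 2L / 6 = -L/3`.
-/

open Filter

def P11 (ξ : ℝ) : ℝ := 1 + ξ + ξ ^ 2

def P12 (ξ : ℝ) : ℝ := 1 - 4 * ξ + ξ ^ 2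

def Q1 (a ξ : ℝ) : ℝ := P11 ξ - 3 * a * P12 ξ

open Topology Real

lemma tendsto_atTop_of_tendsto_mul_exp_add {α : Type*} {l : Filter α} {r : α → ℝ} {c : ℝ}
    (hc : 0 ≤ c) (h : Tendsto (fun i => r i * (exp (r i) + c)) l atTop) : Tendsto r l atTop := by
  rw [tendsto_atTop]
  intro M
  set C := max M 0
  filter_upwards [h.eventually_gt_atTop (C * (exp C + c))] with i hi
  by_contra! hlt
  have hrC : r i ≤ C := hlt.le.trans (le_max_left _ _)
  have : r i * (exp (r i) + c) ≤ C * (exp C + c) :=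
    mul_le_mul hrC (by gcongr) (by positivity) (le_max_right _ _)
  linarith

lemma mul_one_add_eq_of_mul_exp_add_eq {x r N L lam : ℝ} (hlam : lam = x * exp (-r))
    (h : r * (exp r + x) = 2 * N * x * L) : r * (1 + lam) = 2 * N * lam * L := by
  have hexp : exp r * exp (-r) = 1 := by rw [← exp_add, add_neg_cancel, exp_zero]
  rw [hlam]
  linear_combination exp (-r) * h - r * hexp

lemma log_eq_of_mul_one_add_eq {x r N L lam : ℝ} (hx : 0 < x) (hr : 0 < r) (hL : 0 < L)
    (hlam : lam = x * exp (-r)) (h : r * (1 + lam) = 2 * N * lam * L) :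
    log N = log r + r + (log (1 + lam) - log (2 * x * L)) := by
  have hlam_pos : 0 < lam := hlam ▸ by positivity
  have hN : N = r * exp r * (1 + lam) / (2 * x * L) := by
    have hexp : exp r * exp (-r) = 1 := by rw [← exp_add, add_neg_cancel, exp_zero]
    rw [eq_div_iff (by positivity)]
    subst hlam
    linear_combination (-exp r) * h - 2 * N * x * L * hexp
  rw [hN, log_div (by positivity) (by positivity), log_mul (by positivity) (by positivity),
    log_mul (by positivity) (exp_ne_zero _), log_exp]
  ring

lemma tendsto_log_add_self_add_div_self {α : Type*} {l : Filter α} {r b : α → ℝ} {β : ℝ}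
    (hr : Tendsto r l atTop) (hb : Tendsto b l (𝓝 β)) :
    Tendsto (fun i => (log (r i) + r i + b i) / r i) l (𝓝 1) := by
  have hlog : Tendsto (fun i => log (r i) / r i) l (𝓝 0) :=
    isLittleO_log_id_atTop.tendsto_div_nhds_zero.comp hr
  have hsum := (hlog.add_const 1).add (hb.mul hr.inv_tendsto_atTop)
  rw [zero_add, mul_zero, add_zero] at hsum
  refine hsum.congr' ?_
  filter_upwards [hr.eventually_gt_atTop 0] with i hi
  simp only [Pi.inv_apply]
  field_simp

lemma tendsto_neg_Q1_mul_div {α : Type*} {l : Filter α} {a lam chi : α → ℝ} {c : ℝ}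
    (ha : Tendsto a l (𝓝 0)) (hlam : Tendsto lam l (𝓝 0)) (hchi : Tendsto chi l (𝓝 c)) :
    Tendsto (fun i => -Q1 (a i) (lam i) * chi i / (6 * (1 + 2 * a i) ^ 3)) l (𝓝 (-(c / 6))) := by
  have hQ_cont : Continuous fun p : ℝ × ℝ => Q1 p.1 p.2 := by unfold Q1 P11 P12; fun_prop
  have hQ : Tendsto (fun i => Q1 (a i) (lam i)) l (𝓝 (Q1 0 0)) :=
    (hQ_cont.tendsto (0, 0)).comp (ha.prodMk_nhds hlam)
  have hden : Tendsto (fun i => 6 * (1 + 2 * a i) ^ 3) l (𝓝 (6 * (1 + 2 * 0) ^ 3)) :=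
    (((ha.const_mul 2).const_add 1).pow 3).const_mul 6
  have hlim : -Q1 0 0 * c / (6 * (1 + 2 * 0) ^ 3) = -(c / 6) := by
    simp only [Q1, P11, P12]
    ring
  exact hlim ▸ (hQ.neg.mul hchi).div hden (by norm_num)

section SaddlePoint

variable {x L : ℝ} {r lam : ℕ → ℝ}

lemma tendsto_one_add_sq_div_of_saddle (hr : Tendsto r atTop atTop)
    (hlam : Tendsto lam atTop (𝓝 0))
    (hsaddle : ∀ᶠ n in atTop, r n * (1 + lam n) = 2 * n * lam n * L) :
    Tendsto (fun n : ℕ => (1 + lam n) ^ 2 / (4 * n * lam n * L)) atTop (𝓝 0) := by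
  have hone : Tendsto (fun n => 1 + lam n) atTop (𝓝 (1 + 0)) := tendsto_const_nhds.add hlam
  refine (hone.div_atTop (hr.const_mul_atTop two_pos)).congr' ?_
  filter_upwards [hsaddle, hone.eventually_ne (by norm_num : (1 : ℝ) + 0 ≠ 0)] with n hs hne
  have hden : 4 * n * lam n * L = (1 + lam n) * (2 * r n) := by linear_combination (-2) * hs
  rw [hden, sq, mul_div_mul_left _ _ hne]

lemma tendsto_log_div_mul_of_saddle (hx : 0 < x) (hL : 0 < L) (hr : Tendsto r atTop atTop)
    (hlam_eq : ∀ n, lam n = x * exp (-r n)) (hlam : Tendsto lam atTop (𝓝 0))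
    (hsaddle : ∀ᶠ n in atTop, r n * (1 + lam n) = 2 * n * lam n * L) :
    Tendsto (fun n : ℕ => log n / (n * lam n)) atTop (𝓝 (2 * L)) := by
  have hone : Tendsto (fun n => 1 + lam n) atTop (𝓝 (1 + 0)) := tendsto_const_nhds.add hlam
  have hratio := tendsto_log_add_self_add_div_self hr
    ((hone.log (by norm_num)).sub_const (log (2 * x * L)))
  have hfac : Tendsto (fun n => 2 * L / (1 + lam n)) atTop (𝓝 (2 * L / (1 + 0))) :=
    tendsto_const_nhds.div hone (by norm_num)
  have hlim := hratio.mul hfac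
  rw [add_zero, div_one, one_mul] at hlim
  refine hlim.congr' ?_
  filter_upwards [hsaddle, hr.eventually_gt_atTop 0] with n hs hrn
  have hmul : n * lam n = r n * (1 + lam n) / (2 * L) := by
    rw [eq_div_iff (by positivity)]
    linear_combination -hs
  rw [← log_eq_of_mul_one_add_eq hx hrn hL (hlam_eq n) hs, hmul, div_div_eq_mul_div,
    mul_div_mul_comm]

end SaddlePoint

/-- For a real `x > 1`, with `r(n)` the unique positive solution of `t(e^t + x) = 2 n x log x`,
`λ₀(n) = x e^{−r(n)}`, `a₀(n) = (1 + λ₀(n))²/(4 n λ₀(n) log x)`, `χ(n) = log n/(n λ₀(n))`, the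
first steepest-descent coefficient `c₁₀(n) = −Q₁(a₀(n), λ₀(n)) χ(n)/(6 (1 + 2 a₀(n))³)`
satisfies `c₁₀(n) → −(1/3) log x` as `n → ∞`. -/
theorem c10_limit (x : ℝ) (hx : 1 < x) (r : ℕ → ℝ)
    (hr : ∀ n : ℕ, 1 ≤ n → 0 < r n ∧ r n * (Real.exp (r n) + x) = 2 * n * x * Real.log x)
    (lam0 a0 chi c10 : ℕ → ℝ)
    (hlam : ∀ n : ℕ, lam0 n = x * Real.exp (-(r n)))
    (ha : ∀ n : ℕ, a0 n = (1 + lam0 n) ^ 2 / (4 * n * lam0 n * Real.log x))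
    (hchi : ∀ n : ℕ, chi n = Real.log n / (n * lam0 n))
    (hc : ∀ n : ℕ, c10 n = -(Q1 (a0 n) (lam0 n)) * chi n / (6 * (1 + 2 * a0 n) ^ 3)) :
    Tendsto c10 atTop (nhds (-(1 / 3) * Real.log x)) := by
  have hx0 : 0 < x := one_pos.trans hx
  have hL : 0 < log x := log_pos hx
  have hsaddle : ∀ᶠ n : ℕ in atTop, r n * (1 + lam0 n) = 2 * n * lam0 n * log x :=
    (eventually_ge_atTop 1).mono fun n hn => mul_one_add_eq_of_mul_exp_add_eq (hlam n) (hr n hn).2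
  have hr_top : Tendsto r atTop atTop := by
    refine tendsto_atTop_of_tendsto_mul_exp_add hx0.le ?_
    refine (tendsto_natCast_atTop_atTop.atTop_mul_const (by positivity : 0 < 2 * x * log x)).congr'
      ((eventually_ge_atTop 1).mono fun n hn => ?_)
    simp only [(hr n hn).2]
    ring
  have hlam_zero : Tendsto lam0 atTop (𝓝 0) := by
    simpa [← funext hlam] using (tendsto_exp_neg_atTop_nhds_zero.comp hr_top).const_mul x
  have ha_zero : Tendsto a0 atTop (𝓝 0) :=
    (tendsto_one_add_sq_div_of_saddle hr_top hlam_zero hsaddle).congr fun n => (ha n).symm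
  have hchi_lim : Tendsto chi atTop (𝓝 (2 * log x)) :=
    (tendsto_log_div_mul_of_saddle hx0 hL hr_top hlam hlam_zero hsaddle).congr
      fun n => (hchi n).symm
  convert (tendsto_neg_Q1_mul_div ha_zero hlam_zero hchi_lim).congr fun n => (hc n).symm using 2
  ring
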